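/- Let n ≥ 3 and suppose self-adjoint involutions A_1,…,A_n (A_i² = 1) satisfy A_i = α_i A_{i+1} − β_i A_n for i = 1,…,n−2, where α_i = sin(πi/n)/sin(π(i+1)/n), β_i = sin(π/n)/sin(π(i+1)/n). Suppose further that A_2 = cos(π/n)σ_z⊗1 + sin(π/n)σ_x⊗1 and A_n = −cos(π/n)σ_z⊗1 + sin(π/n)σ_x⊗1 on a Hilbert space ℂ²⊗H''. Then A_i = cos(π(i−1)/n)σ_z⊗1 + sin(π(i−1)/n)σ_x⊗1 for all i = 1,…,n. -/

import Mathlib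

/-!
Write `c(t) = cos t • Z + sin t • X` and `θ = π / n`, so that `A 2 = c(θ)` and `A n = c(π - θ)`.
The addition formulas give `sin((i+1)θ) • c((i-1)θ) = sin(iθ) • c(iθ) - sin θ • c(π - θ)`, i.e. the
claimed values `A i = c((i-1)θ)` satisfy the recursion. Since `α_i ≠ 0` for `1 ≤ i ≤ n - 2`, the
recursion determines `A (i+1)` from `A i` and `A n`; induction from `A 2` gives `A 3, …, A (n-1)`,
and the recursion at `i = 1` gives `A 1`.
-/

open Real Matrix Kronecker

def sigmaZ : Matrix (Fin 2) (Fin 2) ℂ := !![1, 0; 0, -1]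
def sigmaX : Matrix (Fin 2) (Fin 2) ℂ := !![0, 1; 1, 0]

noncomputable def lgAlpha (n i : ℕ) : ℝ := Real.sin (π * i / n) / Real.sin (π * (i + 1) / n)
noncomputable def lgBeta (n i : ℕ) : ℝ := Real.sin (π / n) / Real.sin (π * (i + 1) / n)

section CosSinComb

variable {M : Type*} [AddCommGroup M] [Module ℂ M]

noncomputable def cosSinComb (Z X : M) (t : ℝ) : M := (cos t : ℂ) • Z + (sin t : ℂ) • X

theorem cosSinComb_sub_eq (Z X : M) {s θ : ℝ} (h : sin (s + θ) ≠ 0) :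
    cosSinComb Z X (s - θ) =
      ((sin s / sin (s + θ) : ℝ) : ℂ) • cosSinComb Z X s -
        ((sin θ / sin (s + θ) : ℝ) : ℂ) • cosSinComb Z X (π - θ) := by
  have hZ : cos (s - θ) * sin (s + θ) = sin s * cos s + sin θ * cos θ := by
    rw [sin_add, cos_sub]
    linear_combination (sin s * cos s) * sin_sq_add_cos_sq θ + (sin θ * cos θ) * sin_sq_add_cos_sq s
  have hX : sin (s - θ) * sin (s + θ) = sin s * sin s - sin θ * sin θ := by
    rw [sin_add, sin_sub]
    linear_combination (sin s * sin s) * sin_sq_add_cos_sq θ - (sin θ * sin θ) * sin_sq_add_cos_sq s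
  have hZ' : cos (s - θ) = sin s / sin (s + θ) * cos s + sin θ / sin (s + θ) * cos θ := by
    field_simp; linear_combination hZ
  have hX' : sin (s - θ) = sin s / sin (s + θ) * sin s - sin θ / sin (s + θ) * sin θ := by
    field_simp; linear_combination hX
  simp only [cosSinComb, cos_pi_sub, sin_pi_sub, hZ', hX']
  match_scalars <;> ring

theorem sin_pi_mul_div_pos {j n : ℕ} (hj : 0 < j) (hjn : j < n) : 0 < sin (π * j / n) := by
  have hn : (0 : ℝ) < n := by exact_mod_cast hj.trans hjn
  have hj' : (0 : ℝ) < j := by exact_mod_cast hj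
  apply sin_pos_of_pos_of_lt_pi (div_pos (mul_pos pi_pos hj') hn)
  rw [div_lt_iff₀ hn]
  exact mul_lt_mul_of_pos_left (by exact_mod_cast hjn) pi_pos

theorem lgAlpha_pos {n i : ℕ} (hi : 0 < i) (hin : i + 1 < n) : 0 < lgAlpha n i := by
  have hsucc := sin_pi_mul_div_pos (Nat.succ_pos i) hin
  push_cast at hsucc
  exact div_pos (sin_pi_mul_div_pos hi (by omega)) hsucc

theorem cosSinComb_lg_recurrence (Z X : M) {n i : ℕ} (hi : i + 1 < n) :
    cosSinComb Z X (π * ((i : ℝ) - 1) / n) =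
      ((lgAlpha n i : ℝ) : ℂ) • cosSinComb Z X (π * i / n) -
        ((lgBeta n i : ℝ) : ℂ) • cosSinComb Z X (π - π / n) := by
  have hadd : π * ((i : ℝ) + 1) / n = π * i / n + π / n := by ring
  have hs : sin (π * i / n + π / n) ≠ 0 := by
    rw [← hadd]
    exact_mod_cast (sin_pi_mul_div_pos (Nat.succ_pos i) hi).ne'
  rw [show π * ((i : ℝ) - 1) / n = π * i / n - π / n by ring]
  simpa only [lgAlpha, lgBeta, hadd] using cosSinComb_sub_eq Z X hs

theorem eq_cosSinComb_of_lg_recurrence {n : ℕ} (hn : 3 ≤ n) (A : ℕ → M) (Z X : M)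
    (hrec : ∀ i, 1 ≤ i → i ≤ n - 2 →
      A i = ((lgAlpha n i : ℝ) : ℂ) • A (i + 1) - ((lgBeta n i : ℝ) : ℂ) • A n)
    (hA2 : A 2 = cosSinComb Z X (π / n)) (hAn : A n = cosSinComb Z X (π - π / n)) :
    ∀ i, 1 ≤ i → i ≤ n → A i = cosSinComb Z X (π * ((i : ℝ) - 1) / n) := by
  have hmiddle : ∀ j, 2 ≤ j → j ≤ n - 1 → A j = cosSinComb Z X (π * ((j : ℝ) - 1) / n) := by
    intro j hj
    induction j, hj using Nat.le_induction with
    | base => intro _; rw [hA2]; norm_num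
    | succ j hj ih =>
      intro hjn
      have hα : ((lgAlpha n j : ℝ) : ℂ) ≠ 0 := by
        exact_mod_cast (lgAlpha_pos (by omega) (by omega)).ne'
      have h := (hrec j (by omega) (by omega)).symm.trans
        ((ih (by omega)).trans (cosSinComb_lg_recurrence Z X (by omega)))
      rw [hAn] at h
      rw [smul_right_injective M hα (sub_left_injective h)]
      push_cast
      ring_nf
  intro i hi1 hin
  rcases (by omega : i = 1 ∨ (2 ≤ i ∧ i ≤ n - 1) ∨ i = n) with rfl | ⟨h2, hn1⟩ | rfl
  · rw [hrec 1 le_rfl (by omega), hA2, hAn]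
    simpa using (cosSinComb_lg_recurrence Z X (by omega : 1 + 1 < n)).symm
  · exact hmiddle i h2 hn1
  · rw [hAn]
    congr 1
    field_simp

end CosSinComb

theorem selftest_all_observables_general (n m : ℕ) (hn : 3 ≤ n)
    (A : ℕ → Matrix (Fin 2 × Fin m) (Fin 2 × Fin m) ℂ)
    (hrec : ∀ i, 1 ≤ i → i ≤ n - 2 →
      A i = ((lgAlpha n i : ℝ) : ℂ) • A (i + 1) - ((lgBeta n i : ℝ) : ℂ) • A n)
    (hA2 : A 2 = ((Real.cos (π / n) : ℝ) : ℂ) • (sigmaZ ⊗ₖ (1 : Matrix (Fin m) (Fin m) ℂ)) +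
      ((Real.sin (π / n) : ℝ) : ℂ) • (sigmaX ⊗ₖ (1 : Matrix (Fin m) (Fin m) ℂ)))
    (hAn : A n = ((-Real.cos (π / n) : ℝ) : ℂ) • (sigmaZ ⊗ₖ (1 : Matrix (Fin m) (Fin m) ℂ)) +
      ((Real.sin (π / n) : ℝ) : ℂ) • (sigmaX ⊗ₖ (1 : Matrix (Fin m) (Fin m) ℂ))) :
    ∀ i, 1 ≤ i → i ≤ n →
      A i = ((Real.cos (π * ((i : ℝ) - 1) / n) : ℝ) : ℂ) •
          (sigmaZ ⊗ₖ (1 : Matrix (Fin m) (Fin m) ℂ)) +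
        ((Real.sin (π * ((i : ℝ) - 1) / n) : ℝ) : ℂ) •
          (sigmaX ⊗ₖ (1 : Matrix (Fin m) (Fin m) ℂ)) := by
  have hAn' : A n = cosSinComb (sigmaZ ⊗ₖ 1) (sigmaX ⊗ₖ 1) (π - π / n) := by
    rw [hAn, cosSinComb, cos_pi_sub, sin_pi_sub]
  exact eq_cosSinComb_of_lg_recurrence hn A _ _ hrec hA2 hAn'

theorem selftest_all_observables (n m : ℕ) (hn : 3 ≤ n)
    (A : ℕ → Matrix (Fin 2 × Fin m) (Fin 2 × Fin m) ℂ)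
    (hherm : ∀ i, 1 ≤ i → i ≤ n → (A i).IsHermitian)
    (hinv : ∀ i, 1 ≤ i → i ≤ n → A i * A i = 1)
    (hrec : ∀ i, 1 ≤ i → i ≤ n - 2 →
      A i = ((lgAlpha n i : ℝ) : ℂ) • A (i + 1) - ((lgBeta n i : ℝ) : ℂ) • A n)
    (hA2 : A 2 = ((Real.cos (π / n) : ℝ) : ℂ) • (sigmaZ ⊗ₖ (1 : Matrix (Fin m) (Fin m) ℂ)) +
      ((Real.sin (π / n) : ℝ) : ℂ) • (sigmaX ⊗ₖ (1 : Matrix (Fin m) (Fin m) ℂ)))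
    (hAn : A n = ((-Real.cos (π / n) : ℝ) : ℂ) • (sigmaZ ⊗ₖ (1 : Matrix (Fin m) (Fin m) ℂ)) +
      ((Real.sin (π / n) : ℝ) : ℂ) • (sigmaX ⊗ₖ (1 : Matrix (Fin m) (Fin m) ℂ))) :
    ∀ i, 1 ≤ i → i ≤ n →
      A i = ((Real.cos (π * ((i : ℝ) - 1) / n) : ℝ) : ℂ) •
          (sigmaZ ⊗ₖ (1 : Matrix (Fin m) (Fin m) ℂ)) +
        ((Real.sin (π * ((i : ℝ) - 1) / n) : ℝ) : ℂ) •
          (sigmaX ⊗ₖ (1 : Matrix (Fin m) (Fin m) ℂ)) :=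
  selftest_all_observables_general n m hn A hrec hA2 hAn
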